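/- arXiv:0811.3595 — 4 statements merged into one kernel-verified Lean document; each statement's English description precedes it below -/
import Mathlib

section
/- (Jucys) For every 0 ≤ r ≤ n, the elementary symmetric polynomial in the Jucys–Murphy elements equals the sum of all permutations with exactly n − r cycles: e_r(J_1,…,J_n) = Σ_{σ ∈ S_n, cycles(σ) = n − r} σ. -/
/-- The Jucys–Murphy element `J_{i+1}` (1-based: `J_1 = 0`,
`J_i = (1,i) + ⋯ + (i-1,i)`) in the complex group algebra of `S_n`. -/
noncomputable def jm (n : ℕ) (i : Fin n) : MonoidAlgebra ℂ (Equiv.Perm (Fin n)) :=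
  ∑ k ∈ Finset.univ.filter (fun k => k < i),
    MonoidAlgebra.of ℂ (Equiv.Perm (Fin n)) (Equiv.swap k i)

/-- The number of orbits of a permutation (cycles, counting fixed points). -/
def cycles {n : ℕ} (σ : Equiv.Perm (Fin n)) : ℕ :=
  σ.cycleType.card + (Finset.univ.filter fun x => σ x = x).card

/-- The `r`-th elementary symmetric polynomial evaluated at the Jucys–Murphy elements:
`e_r(J_1,…,J_n) = Σ_{i_1 < ⋯ < i_r} J_{i_1} ⋯ J_{i_r}` (the JM elements commute, so the
order of the factors is immaterial; we multiply them in increasing order). -/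
noncomputable def eJM (n r : ℕ) : MonoidAlgebra ℂ (Equiv.Perm (Fin n)) :=
  ∑ s ∈ Finset.univ.powersetCard r, ((s.sort (· ≤ ·)).map (jm n)).prod

/-!
Both sides satisfy the same recursion as the variables are added one at a time. Splitting off the
largest index `a` gives `e_{r+1}(J_{<a}, J_a) = e_{r+1}(J_{<a}) + e_r(J_{<a}) J_a`. On the other
side, a permutation `σ` supported in `{i ≤ a}` either fixes `a`, or factors uniquely as
`τ * (k a)` with `k = σ⁻¹ a < a` and `τ` supported in `{i < a}`; multiplying `τ` by `(k a)` splices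
the fixed point `a` into the cycle of `τ` through `k`, so it removes exactly one cycle.
-/

open Equiv Equiv.Perm Finset

namespace Equiv.Perm

variable {α : Type*} [DecidableEq α] [Fintype α] {τ : Perm α} {k m : α}

theorem IsCycle.mul_swap_of_apply_eq_self {c : Perm α} (hc : c.IsCycle) (hk : c k ≠ k)
    (hm : c m = m) : (c * swap k m).IsCycle := by
  have hck : c k ∈ c.support := by simpa using hk
  have hlen : 2 ≤ (c.toList (c k)).length := two_le_length_toList_iff_mem_support.2 hck
  obtain ⟨l, hl⟩ : ∃ l, c.toList (c k) = c k :: l := by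
    cases h : c.toList (c k) with
    | nil => simp [h] at hlen
    | cons x l =>
      have h0 := toList_getElem_zero c (c k) hck
      simp only [h, List.getElem_cons_zero] at h0
      exact ⟨l, by rw [h0]⟩
  have hmL : m ∉ c.toList (c k) := fun h =>
    (mem_support.1 ((mem_toList_iff.1 h).1.mem_support_iff.1 hck)) hm
  -- `c * swap k m` is the cycle of `c` with `m` inserted between `k` and `c k`.
  have hform : (m :: c.toList (c k)).formPerm = c * swap k m := by
    rw [hl, List.formPerm_cons_cons, ← hl, formPerm_toList, hc.cycleOf_eq (mem_support.1 hck),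
      mul_swap_eq_swap_mul, hm, swap_comm]
  rw [← hform]
  exact List.isCycle_formPerm (List.nodup_cons.2 ⟨hmL, nodup_toList _ _⟩)
    (by simp only [List.length_cons]; omega)
theorem support_mul_swap_of_apply_eq_self (hm : τ m = m) (hkm : k ≠ m) :
    (τ * swap k m).support = insert k (insert m τ.support) := by
  have hτk : τ k ≠ m := fun h => hkm (τ.injective (h.trans hm.symm))
  ext x
  by_cases hxk : x = k
  · subst hxk; simp [hm, hkm.symm]
  by_cases hxm : x = m
  · subst hxm; simp [hτk]
  simp [swap_apply_of_ne_of_ne hxk hxm, hxk, hxm]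

theorem card_cycleType_mul_swap_of_apply_eq_self (hm : τ m = m) (hkm : k ≠ m) :
    (τ * swap k m).cycleType.card = τ.cycleType.card + if τ k = k then 1 else 0 := by
  split_ifs with hk
  · have hdisj : τ.Disjoint (swap k m) := by
      intro x
      by_cases hx : x = k ∨ x = m
      · rcases hx with rfl | rfl <;> simp [hk, hm]
      · push Not at hx; exact Or.inr (swap_apply_of_ne_of_ne hx.1 hx.2)
    rw [hdisj.cycleType_mul, Multiset.card_add, card_cycleType_eq_one.2 (isCycle_swap hkm)]
  · set c := τ.cycleOf k
    have hcτ : c ∈ τ.cycleFactorsFinset :=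
      cycleOf_mem_cycleFactorsFinset_iff.2 (mem_support.2 hk)
    have hck : c k ≠ k := by rwa [cycleOf_apply_self]
    have hcm : c m = m := by rw [cycleOf_apply]; split_ifs <;> simp [hm]
    have hc : c.IsCycle := isCycle_cycleOf τ hk
    set d := τ * c⁻¹
    have hdc : d.Disjoint c := disjoint_mul_inv_of_mem_cycleFactorsFinset hcτ
    have hdswap : d.Disjoint (swap k m) := by
      intro x
      by_cases hx : x = k ∨ x = m
      · refine Or.inl ?_
        rcases hx with rfl | rfl
        · exact (hdc x).resolve_right hck
        · rw [mul_apply, inv_eq_iff_eq.2 hcm.symm, hm]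
      · push Not at hx; exact Or.inr (swap_apply_of_ne_of_ne hx.1 hx.2)
    have hτ : τ = d * c := by simp [d]
    rw [hτ, mul_assoc, (hdc.mul_right hdswap).cycleType_mul, hdc.cycleType_mul,
      Multiset.card_add, Multiset.card_add, card_cycleType_eq_one.2 hc,
      card_cycleType_eq_one.2 (hc.mul_swap_of_apply_eq_self hck hcm), add_zero]

end Equiv.Perm

theorem Equiv.Perm.support_mul_swap_subset_Iic_iff {α : Type*} [Fintype α] [LinearOrder α]
    [LocallyFiniteOrderBot α] {τ : Perm α} {k a : α} (hτ : τ a = a) (hka : k ≠ a) :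
    (τ * swap k a).support ⊆ Iic a ↔ τ.support ⊆ Iio a ∧ k < a := by
  rw [support_mul_swap_of_apply_eq_self hτ hka, insert_subset_iff, insert_subset_iff,
    ← Iic_erase, subset_erase, mem_Iic, lt_iff_le_and_ne]
  simp [hτ, hka, and_comm]

theorem Finset.sort_insert_of_forall_lt {α : Type*} [LinearOrder α] {s : Finset α} {a : α}
    (h : ∀ x ∈ s, x < a) : (insert a s).sort (· ≤ ·) = s.sort (· ≤ ·) ++ [a] := by
  have ha : a ∉ s := fun has => lt_irrefl a (h a has)
  refine List.Perm.eq_of_pairwise' (pairwise_sort _ _) ?_ ?_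
  · simpa [List.pairwise_append, pairwise_sort] using fun x hx => (h x hx).le
  · rw [List.perm_ext_iff_of_nodup (sort_nodup _ _)
      ((sort_nodup _ _).append (List.nodup_singleton a) (by simpa using ha))]
    simp [or_comm]

section JucysMurphy

variable {n : ℕ}

theorem cycles_add_card_support (σ : Perm (Fin n)) :
    cycles σ + #σ.support = n + σ.cycleType.card := by
  have hsplit := card_filter_add_card_filter_not (s := univ) fun x => σ x = x
  have hsupp : #σ.support = #{x | ¬σ x = x} := rfl
  rw [card_univ, Fintype.card_fin] at hsplit
  rw [cycles]
  omega

theorem cycles_one : cycles (1 : Perm (Fin n)) = n := by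
  simp [cycles]

theorem eq_one_of_cycles_eq {σ : Perm (Fin n)} (h : cycles σ = n) : σ = 1 := by
  have h2 : 2 * σ.cycleType.card ≤ #σ.support := by
    rw [← sum_cycleType, mul_comm, ← smul_eq_mul]
    exact Multiset.card_nsmul_le_sum fun _ => two_le_of_mem_cycleType
  have := cycles_add_card_support σ
  rw [← support_eq_empty_iff, ← card_eq_zero]
  omega

theorem cycles_mul_swap {τ : Perm (Fin n)} {k m : Fin n} (hm : τ m = m) (hkm : k ≠ m) :
    cycles (τ * swap k m) + 1 = cycles τ := by
  have hτ := cycles_add_card_support τ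
  have hσ := cycles_add_card_support (τ * swap k m)
  have hmτ : m ∉ τ.support := notMem_support.2 hm
  rw [support_mul_swap_of_apply_eq_self hm hkm, card_cycleType_mul_swap_of_apply_eq_self hm hkm]
    at hσ
  split_ifs at hσ with hk
  · rw [card_insert_of_notMem (by simp [hkm, hk]), card_insert_of_notMem hmτ] at hσ
    omega
  · rw [card_insert_of_mem (by simp [hk]), card_insert_of_notMem hmτ] at hσ
    omega

noncomputable def esymmJM (D : Finset (Fin n)) (r : ℕ) : MonoidAlgebra ℂ (Perm (Fin n)) :=
  ∑ s ∈ D.powersetCard r, ((s.sort (· ≤ ·)).map (jm n)).prod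

/-- Stated as `cycles σ + r = n` rather than `cycles σ = n - r` to avoid truncated subtraction. -/
noncomputable def supportedPermSum (D : Finset (Fin n)) (r : ℕ) :
    MonoidAlgebra ℂ (Perm (Fin n)) :=
  ∑ σ ∈ univ.filter (fun σ : Perm (Fin n) => σ.support ⊆ D ∧ cycles σ + r = n),
    MonoidAlgebra.of ℂ (Perm (Fin n)) σ

theorem esymmJM_zero (D : Finset (Fin n)) : esymmJM D 0 = 1 := by
  simp [esymmJM]

theorem esymmJM_empty_succ (r : ℕ) : esymmJM (∅ : Finset (Fin n)) (r + 1) = 0 := by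
  rw [esymmJM, powersetCard_eq_empty.2 (by simp), sum_empty]

theorem esymmJM_insert {D : Finset (Fin n)} {a : Fin n} (ha : ∀ x ∈ D, x < a) (r : ℕ) :
    esymmJM (insert a D) (r + 1) = esymmJM D (r + 1) + esymmJM D r * jm n a := by
  have haD : a ∉ D := fun h => lt_irrefl a (ha a h)
  have hnot : ∀ s ∈ D.powersetCard r, a ∉ s := fun s hs has =>
    haD ((mem_powersetCard.1 hs).1 has)
  have hdisj : Disjoint (D.powersetCard (r + 1)) ((D.powersetCard r).image (insert a)) :=
    disjoint_left.2 fun s hs hs' => by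
      obtain ⟨t, -, rfl⟩ := mem_image.1 hs'
      exact haD ((mem_powersetCard.1 hs).1 (mem_insert_self a t))
  have hinj : Set.InjOn (insert a) (D.powersetCard r : Set (Finset (Fin n))) := by
    intro s hs t ht hst
    rw [← erase_insert (hnot s (mem_coe.1 hs)), ← erase_insert (hnot t (mem_coe.1 ht)), hst]
  rw [esymmJM, powersetCard_succ_insert haD, sum_union hdisj, sum_image hinj, esymmJM, esymmJM,
    sum_mul]
  congr 1
  refine sum_congr rfl fun s hs => ?_
  rw [sort_insert_of_forall_lt fun x hx => ha x ((mem_powersetCard.1 hs).1 hx), List.map_append,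
    List.prod_append, List.map_singleton, List.prod_singleton]

theorem supportedPermSum_zero (D : Finset (Fin n)) : supportedPermSum D 0 = 1 := by
  have : univ.filter (fun σ : Perm (Fin n) => σ.support ⊆ D ∧ cycles σ + 0 = n) = {1} := by
    ext σ
    simp only [mem_filter, mem_univ, true_and, mem_singleton, add_zero]
    exact ⟨fun h => eq_one_of_cycles_eq h.2, by rintro rfl; simp [cycles_one]⟩
  rw [supportedPermSum, this, sum_singleton, map_one]

theorem supportedPermSum_empty_succ (r : ℕ) :
    supportedPermSum (∅ : Finset (Fin n)) (r + 1) = 0 := by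
  refine sum_eq_zero fun σ hσ => ?_
  obtain ⟨hsupp, hcyc⟩ := (mem_filter.1 hσ).2
  rw [subset_empty, support_eq_empty_iff] at hsupp
  rw [hsupp, cycles_one] at hcyc
  omega

theorem supportedPermSum_mul_jm (a : Fin n) (r : ℕ) :
    supportedPermSum (Iio a) r * jm n a =
      ∑ σ ∈ (univ.filter fun σ : Perm (Fin n) =>
          σ.support ⊆ Iic a ∧ cycles σ + (r + 1) = n).filter (fun σ => σ a ≠ a),
        MonoidAlgebra.of ℂ (Perm (Fin n)) σ := by
  have hjm : jm n a = ∑ k ∈ Iio a, MonoidAlgebra.of ℂ (Perm (Fin n)) (swap k a) := by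
    rw [jm, filter_gt_eq_Iio]
  have hfix : ∀ τ : Perm (Fin n), τ.support ⊆ Iio a → τ a = a := fun τ h =>
    notMem_support.1 fun ha => lt_irrefl a (mem_Iio.1 (h ha))
  rw [supportedPermSum, hjm, sum_mul_sum, ← sum_product']
  simp_rw [← map_mul]
  refine sum_nbij' (fun p => p.1 * swap p.2 a) (fun σ => (σ * swap (σ⁻¹ a) a, σ⁻¹ a))
    ?_ ?_ ?_ ?_ fun _ _ => rfl
  · rintro ⟨τ, k⟩ hp
    simp only [mem_product, mem_filter, mem_univ, true_and, mem_Iio] at hp ⊢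
    obtain ⟨⟨hsupp, hcyc⟩, hk⟩ := hp
    have hτ := hfix τ hsupp
    have hcyc' := cycles_mul_swap hτ hk.ne
    refine ⟨⟨(support_mul_swap_subset_Iic_iff hτ hk.ne).2 ⟨hsupp, hk⟩, by omega⟩, ?_⟩
    rw [mul_apply, swap_apply_right]
    exact fun h => hk.ne (τ.injective (h.trans hτ.symm))
  · intro σ hσ
    simp only [mem_product, mem_filter, mem_univ, true_and, mem_Iio] at hσ ⊢
    obtain ⟨⟨hsupp, hcyc⟩, hσa⟩ := hσ
    set k := σ⁻¹ a
    have hk : σ k = a := by simp [k]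
    have hka : k ≠ a := fun h => hσa (h ▸ hk)
    have hτ : (σ * swap k a) a = a := by rw [mul_apply, swap_apply_right, hk]
    have hστ : σ * swap k a * swap k a = σ := by rw [mul_assoc, swap_mul_self, mul_one]
    rw [← hστ] at hsupp hcyc
    have hcyc' := cycles_mul_swap hτ hka
    obtain ⟨hτsupp, hklt⟩ := (support_mul_swap_subset_Iic_iff hτ hka).1 hsupp
    exact ⟨⟨hτsupp, by omega⟩, hklt⟩
  · rintro ⟨τ, k⟩ hp
    simp only [mem_product, mem_filter, mem_univ, true_and] at hp
    have hk : (τ * swap k a)⁻¹ a = k := by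
      rw [inv_eq_iff_eq, mul_apply, swap_apply_left, hfix τ hp.1.1]
    simp only [hk, mul_assoc, swap_mul_self, mul_one]
  · intro σ _
    simp only [mul_assoc, swap_mul_self, mul_one]

theorem supportedPermSum_Iic (a : Fin n) (r : ℕ) :
    supportedPermSum (Iic a) (r + 1) =
      supportedPermSum (Iio a) (r + 1) + supportedPermSum (Iio a) r * jm n a := by
  rw [supportedPermSum_mul_jm, supportedPermSum, supportedPermSum,
    ← sum_filter_add_sum_filter_not _ fun σ => σ a = a, filter_filter]
  congr 1
  refine sum_congr (filter_congr fun σ _ => ?_) fun _ _ => rfl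
  rw [← Iic_erase, subset_erase, notMem_support]
  tauto

theorem esymmJM_eq_supportedPermSum (m r : ℕ) :
    esymmJM (univ.filter fun i : Fin n => (i : ℕ) < m) r =
      supportedPermSum (univ.filter fun i : Fin n => (i : ℕ) < m) r := by
  induction m generalizing r with
  | zero =>
    cases r with
    | zero => rw [esymmJM_zero, supportedPermSum_zero]
    | succ r =>
      have hempty : (univ.filter fun i : Fin n => (i : ℕ) < 0) = ∅ := by simp
      rw [hempty, esymmJM_empty_succ, supportedPermSum_empty_succ]
  | succ m ih =>
    cases r with
    | zero => rw [esymmJM_zero, supportedPermSum_zero]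
    | succ r =>
      by_cases hm : m < n
      · set a : Fin n := ⟨m, hm⟩
        have hIio : (univ.filter fun i : Fin n => (i : ℕ) < m) = Iio a := by
          ext i; simp [a, Fin.lt_def]
        have hIic : (univ.filter fun i : Fin n => (i : ℕ) < m + 1) = Iic a := by
          ext i; simp [a, Fin.le_def]
        rw [hIio] at ih
        rw [hIic, ← Iio_insert, esymmJM_insert fun x => mem_Iio.1, Iio_insert,
          supportedPermSum_Iic, ih, ih]
      · have hsame : (univ.filter fun i : Fin n => (i : ℕ) < m + 1) =
            univ.filter fun i : Fin n => (i : ℕ) < m :=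
          filter_congr fun i _ => by omega
        rw [hsame]
        exact ih _

end JucysMurphy

theorem eJM_eq_sum_perms_with_cycles_general (n : ℕ) (r : ℕ) (hr : r ≤ n) :
    eJM n r =
      ∑ σ ∈ Finset.univ.filter (fun σ : Equiv.Perm (Fin n) => cycles σ = n - r),
        MonoidAlgebra.of ℂ (Equiv.Perm (Fin n)) σ := by
  have h := esymmJM_eq_supportedPermSum (n := n) n r
  rw [filter_true_of_mem fun i _ => i.isLt] at h
  refine h.trans (sum_congr (filter_congr fun σ _ => ?_) fun _ _ => rfl)
  rw [and_iff_right (subset_univ _)]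
  omega

/-- Jucys' theorem: `e_r(J_1,…,J_n)` is the sum of all permutations with exactly
`n - r` cycles. -/
theorem eJM_eq_sum_perms_with_cycles (n : ℕ) (hn : 1 ≤ n) (r : ℕ) (hr : r ≤ n) :
    eJM n r =
      ∑ σ ∈ Finset.univ.filter (fun σ : Equiv.Perm (Fin n) => cycles σ = n - r),
        MonoidAlgebra.of ℂ (Equiv.Perm (Fin n)) σ :=
  eJM_eq_sum_perms_with_cycles_general n r hr
end

section
/- For every symmetric polynomial f in n variables over ℂ (that is, every f ∈ MvPolynomial (Fin n) ℂ invariant under all permutations of the variables), the evaluation f(J_1,…,J_n) lies in the center of the group algebra A. -/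
/-- Evaluation of a multivariate polynomial at the Jucys–Murphy elements `(J_1,…,J_n)`.
Since the JM elements pairwise commute, the order of the factors in each monomial is
immaterial; we fix the increasing order of the variables. -/
noncomputable def evalJM (n : ℕ) (f : MvPolynomial (Fin n) ℂ) :
    MonoidAlgebra ℂ (Equiv.Perm (Fin n)) :=
  Finsupp.sum (AddMonoidAlgebra.coeff f) fun m c => c • ((List.finRange n).map fun i => jm n i ^ m i).prod

/-! The group algebra is spanned by the permutations, and `S_n` is generated by the adjacent
transpositions `s = (u, u+1)`, so it suffices that `s` commutes with `f(J)`. Conjugation by `s`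
fixes `J_k` for `k ≠ u, u+1` and sends `(J_u, J_{u+1})` to `(J_{u+1} - s, J_u + s)`, a pair with
the same sum and the same product. As `f` is invariant under `X_u ↔ X_{u+1}`, it is a polynomial
in `X_u + X_{u+1}`, `X_u X_{u+1}` and the remaining variables, hence `s f(J) s = f(J)`. -/

namespace MvPolynomial

section Commuting

variable {R A σ : Type*} [CommSemiring R] [Semiring A] [Algebra R A]

open scoped IsMulCommutative in
/-- `aeval` needs a commutative target; a pairwise commuting family generates one. -/
noncomputable def aevalOfCommute (x : σ → A) (hx : ∀ i j, Commute (x i) (x j)) :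
    MvPolynomial σ R →ₐ[R] A :=
  haveI := Algebra.isMulCommutative_adjoin R (s := Set.range x) <| by
    rintro _ ⟨i, rfl⟩ _ ⟨j, rfl⟩; exact hx i j
  (Algebra.adjoin R (Set.range x)).val.comp (aeval fun i => ⟨x i, Algebra.subset_adjoin ⟨i, rfl⟩⟩)

variable (x : σ → A) (hx : ∀ i j, Commute (x i) (x j))

@[simp]
theorem aevalOfCommute_X (i : σ) : aevalOfCommute x hx (X i : MvPolynomial σ R) = x i := by
  simp [aevalOfCommute]

theorem semiconjBy_aevalOfCommute {y : σ → A} (hy : ∀ i j, Commute (y i) (y j)) {s : A}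
    (h : ∀ i, SemiconjBy s (x i) (y i)) (f : MvPolynomial σ R) :
    SemiconjBy s (aevalOfCommute x hx f) (aevalOfCommute y hy f) := by
  induction f using MvPolynomial.induction_on with
  | C c => rw [algHom_C, algHom_C]; exact Algebra.commute_algebraMap_right c s
  | add p q hp hq => simpa only [map_add] using hp.add_right hq
  | mul_X p i hp => simpa only [map_mul, aevalOfCommute_X] using hp.mul_right (h i)

end Commuting

section Fin

variable {R A : Type*} [CommSemiring R] [Semiring A] [Algebra R A] {n : ℕ}
  (x : Fin n → A) (hx : ∀ i j, Commute (x i) (x j))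

theorem aevalOfCommute_monomial (m : Fin n →₀ ℕ) (c : R) :
    aevalOfCommute x hx (monomial m c) = c • ((List.finRange n).map fun i => x i ^ m i).prod := by
  rw [monomial_eq, Finsupp.prod_fintype _ _ fun _ => pow_zero _, Fin.prod_univ_def, map_mul,
    map_list_prod, List.map_map, algHom_C, Algebra.smul_def]
  simp [Function.comp_def]

theorem aevalOfCommute_eq_sum (f : MvPolynomial (Fin n) R) :
    aevalOfCommute x hx f = Finsupp.sum (AddMonoidAlgebra.coeff f)
      fun m c => c • ((List.finRange n).map fun i => x i ^ m i).prod := by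
  conv_lhs => rw [f.as_sum]
  simp only [map_sum, aevalOfCommute_monomial]
  rfl

end Fin

section SwapInvariant

variable {R σ : Type*} [CommRing R]

def swapGenerators (u v : σ) : Set (MvPolynomial σ R) :=
  insert (X u + X v) (insert (X u * X v) (X '' {u, v}ᶜ))

variable {u v : σ}

theorem exists_mem_adjoin_swapGenerators_eq_add_mul_X (f : MvPolynomial σ R) :
    ∃ a ∈ Algebra.adjoin R (swapGenerators u v), ∃ b ∈ Algebra.adjoin R (swapGenerators u v),
      f = a + b * X v := by
  set B := Algebra.adjoin R (swapGenerators (R := R) u v)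
  have hsum : X u + X v ∈ B := Algebra.subset_adjoin (Set.mem_insert _ _)
  have hprod : X u * X v ∈ B :=
    Algebra.subset_adjoin (Set.mem_insert_of_mem _ (Set.mem_insert _ _))
  induction f using MvPolynomial.induction_on with
  | C c => exact ⟨C c, B.algebraMap_mem c, 0, B.zero_mem, by ring⟩
  | add p q hp hq =>
    obtain ⟨a, ha, b, hb, rfl⟩ := hp
    obtain ⟨a', ha', b', hb', rfl⟩ := hq
    exact ⟨a + a', B.add_mem ha ha', b + b', B.add_mem hb hb', by ring⟩
  | mul_X p k hp =>
    obtain ⟨a, ha, b, hb, rfl⟩ := hp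
    by_cases hkv : k = v
    · subst hkv
      exact ⟨-(b * (X u * X k)), B.neg_mem (B.mul_mem hb hprod), a + b * (X u + X k),
        B.add_mem ha (B.mul_mem hb hsum), by ring⟩
    by_cases hku : k = u
    · subst hku
      exact ⟨a * (X k + X v) + b * (X k * X v),
        B.add_mem (B.mul_mem ha hsum) (B.mul_mem hb hprod), -a, B.neg_mem ha, by ring⟩
    have hk : X k ∈ B := Algebra.subset_adjoin <| Set.mem_insert_of_mem _ <|
      Set.mem_insert_of_mem _ ⟨k, by simp [hku, hkv], rfl⟩
    exact ⟨a * X k, B.mul_mem ha hk, b * X k, B.mul_mem hb hk, by ring⟩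

variable [DecidableEq σ]

theorem rename_swap_eq_self_of_mem_adjoin {f : MvPolynomial σ R}
    (hf : f ∈ Algebra.adjoin R (swapGenerators u v)) : rename (Equiv.swap u v) f = f := by
  suffices Algebra.adjoin R (swapGenerators u v) ≤
      AlgHom.equalizer (rename (Equiv.swap u v)) (AlgHom.id R _) from this hf
  rw [Algebra.adjoin_le_iff, swapGenerators, Set.insert_subset_iff, Set.insert_subset_iff,
    Set.image_subset_iff]
  refine ⟨by simp [add_comm], by simp [mul_comm], fun k hk => ?_⟩
  simp only [Set.mem_compl_iff, Set.mem_insert_iff, Set.mem_singleton_iff, not_or] at hk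
  simp [Equiv.swap_apply_of_ne_of_ne hk.1 hk.2]

theorem mem_adjoin_swapGenerators_of_rename_eq [IsDomain R] (hne : u ≠ v)
    {f : MvPolynomial σ R} (hf : rename (Equiv.swap u v) f = f) :
    f ∈ Algebra.adjoin R (swapGenerators u v) := by
  obtain ⟨a, ha, b, hb, rfl⟩ := exists_mem_adjoin_swapGenerators_eq_add_mul_X (u := u) (v := v) f
  have hswap : b * X u = b * X v := by
    simpa [rename_swap_eq_self_of_mem_adjoin ha, rename_swap_eq_self_of_mem_adjoin hb] using hf
  obtain rfl : b = 0 := by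
    have : b * (X u - X v) = 0 := by rw [mul_sub, hswap, sub_self]
    simpa [sub_eq_zero, X_injective.ne hne] using this
  simpa using ha

end SwapInvariant

section Involution

variable {R A σ : Type*} [CommRing R] [IsDomain R] [Ring A] [Algebra R A] [DecidableEq σ]
  {x y : σ → A} (hx : ∀ i j, Commute (x i) (x j)) (hy : ∀ i j, Commute (y i) (y j)) {u v : σ}

theorem aevalOfCommute_eq_of_rename_swap_eq (hne : u ≠ v)
    (heq : ∀ k, k ≠ u → k ≠ v → x k = y k) (hsum : x u + x v = y u + y v)
    (hprod : x u * x v = y u * y v) {f : MvPolynomial σ R}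
    (hf : rename (Equiv.swap u v) f = f) : aevalOfCommute x hx f = aevalOfCommute y hy f := by
  suffices Algebra.adjoin R (swapGenerators u v) ≤
      AlgHom.equalizer (aevalOfCommute x hx) (aevalOfCommute y hy) from
    this (mem_adjoin_swapGenerators_of_rename_eq hne hf)
  rw [Algebra.adjoin_le_iff, swapGenerators, Set.insert_subset_iff, Set.insert_subset_iff,
    Set.image_subset_iff]
  refine ⟨by simpa using hsum, by simpa using hprod, fun k hk => ?_⟩
  simp only [Set.mem_compl_iff, Set.mem_insert_iff, Set.mem_singleton_iff, not_or] at hk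
  simpa using heq k hk.1 hk.2

theorem commute_aevalOfCommute_of_mul_self_eq_one {s : A} (hs : s * s = 1) (hne : u ≠ v)
    (hsu : s * x u = (x v - s) * s) (hsk : ∀ k, k ≠ u → k ≠ v → Commute s (x k))
    {f : MvPolynomial σ R} (hf : rename (Equiv.swap u v) f = f) :
    Commute s (aevalOfCommute x hx f) := by
  have conj_mul (a b : A) : s * a * s * (s * b * s) = s * (a * b) * s := by
    simp only [mul_assoc, ← mul_assoc s s, hs, one_mul]
  set y : σ → A := fun k => s * x k * s
  have hy : ∀ i j, Commute (y i) (y j) := fun i j => by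
    simp only [Commute, SemiconjBy, y, conj_mul, (hx i j).eq]
  have hxy : ∀ k, SemiconjBy s (x k) (y k) := fun k => by
    simp only [SemiconjBy, y, mul_assoc, hs, mul_one]
  have hyu : y u = x v - s := by simp only [y]; rw [hsu, mul_assoc, hs, mul_one]
  have hyv : y v = x u + s := by
    have : x u = s * (x v - s) * s := by rw [mul_assoc, ← hsu, ← mul_assoc, hs, one_mul]
    simp only [this, mul_sub, sub_mul, hs, one_mul, y]; abel
  have hyk : ∀ k, k ≠ u → k ≠ v → x k = y k := fun k hku hkv => by
    simp only [y]; rw [(hsk k hku hkv).eq, mul_assoc, hs, mul_one]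
  have hprod : x u * x v = y u * y v := by
    rw [hyu, hyv, (hx u v).eq, sub_mul, mul_add, mul_add, hsu, sub_mul, hs]
    abel
  have heval := aevalOfCommute_eq_of_rename_swap_eq hx hy hne hyk
    (by rw [hyu, hyv]; abel) hprod hf
  simpa only [Commute, ← heval] using semiconjBy_aevalOfCommute x hx hy hxy f

end Involution

end MvPolynomial

theorem Equiv.pred_swap_apply_iff {α : Type*} [DecidableEq α] {p : α → Prop} {a b : α}
    (h : p a ↔ p b) (c : α) : p (Equiv.swap a b c) ↔ p c := by
  rcases eq_or_ne c a with rfl | hca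
  · simp [h]
  rcases eq_or_ne c b with rfl | hcb
  · simp [h]
  rw [Equiv.swap_apply_of_ne_of_ne hca hcb]

theorem Equiv.Perm.mclosure_swap_adjacent (n : ℕ) :
    Submonoid.closure
      {σ : Equiv.Perm (Fin n) | ∃ u v : Fin n, (v : ℕ) = u + 1 ∧ σ = Equiv.swap u v} = ⊤ := by
  cases n with
  | zero => exact Subsingleton.elim _ _
  | succ m =>
    refine top_le_iff.1 <| (Equiv.Perm.mclosure_swap_castSucc_succ m).ge.trans <|
      Submonoid.closure_mono ?_
    rintro _ ⟨i, rfl⟩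
    exact ⟨i.castSucc, i.succ, by simp, rfl⟩

theorem MonoidAlgebra.mem_center_of_commute_of_mclosure_eq_top {k G : Type*} [CommSemiring k]
    [Monoid G] {S : Set G} (hS : Submonoid.closure S = ⊤) {z : MonoidAlgebra k G}
    (hz : ∀ g ∈ S, Commute (MonoidAlgebra.of k G g) z) :
    z ∈ Subalgebra.center k (MonoidAlgebra k G) := by
  have hof (g : G) : Commute (MonoidAlgebra.of k G g) z := by
    induction (hS ▸ Submonoid.mem_top g : g ∈ Submonoid.closure S) using
      Submonoid.closure_induction with
    | mem g hg => exact hz g hg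
    | one => simpa only [map_one] using Commute.one_left z
    | mul g h _ _ hg hh => simpa only [map_mul] using hg.mul_left hh
  rw [Subalgebra.mem_center_iff]
  intro b
  refine (Algebra.commute_of_mem_adjoin_of_forall_mem_commute
    (MonoidAlgebra.mem_adjoin_support b) ?_).symm.eq
  rintro _ ⟨g, -, rfl⟩
  exact (hof g).symm

open MonoidAlgebra Finset

section JucysMurphy

variable {n : ℕ}

theorem commute_of_jm_of_apply_eq_self {σ : Equiv.Perm (Fin n)} {k : Fin n} (hk : σ k = k)
    (hσ : ∀ a, σ a < k ↔ a < k) : Commute (of ℂ _ σ) (jm n k) := by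
  simp only [Commute, SemiconjBy, jm, mul_sum, sum_mul, ← map_mul]
  refine Finset.sum_equiv σ (fun a => by simp [hσ]) (fun a _ => ?_)
  rw [Equiv.mul_swap_eq_swap_mul, hk]

theorem commute_jm (j k : Fin n) : Commute (jm n j) (jm n k) := by
  wlog hjk : j < k generalizing j k
  · rcases (not_lt.1 hjk).eq_or_lt with h | h
    · rw [h]
    · exact (this k j h).symm
  rw [jm]
  refine Commute.sum_left _ _ _ fun a ha => ?_
  have hak : a < k := (Finset.mem_filter.1 ha).2.trans hjk
  exact commute_of_jm_of_apply_eq_self (Equiv.swap_apply_of_ne_of_ne hak.ne' hjk.ne')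
    (Equiv.pred_swap_apply_iff (p := (· < k)) (iff_of_true hak hjk))

theorem evalJM_eq_aevalOfCommute (f : MvPolynomial (Fin n) ℂ) :
    evalJM n f = MvPolynomial.aevalOfCommute (jm n) commute_jm f :=
  (MvPolynomial.aevalOfCommute_eq_sum _ _ f).symm

variable {u v : Fin n} (huv : (v : ℕ) = u + 1)
include huv

theorem of_swap_mul_jm_of_val_eq_succ :
    of ℂ _ (Equiv.swap u v) * jm n u =
      (jm n v - of ℂ _ (Equiv.swap u v)) * of ℂ _ (Equiv.swap u v) := by
  have hv : jm n v =
      of ℂ _ (Equiv.swap u v) + ∑ a ∈ univ.filter (· < u), of ℂ _ (Equiv.swap a v) := by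
    have : univ.filter (· < v) = insert u (univ.filter (· < u)) := by
      ext a
      simp only [mem_filter, mem_univ, true_and, mem_insert, Fin.lt_def, Fin.ext_iff]
      omega
    rw [jm, this, sum_insert (by simp)]
  rw [hv, add_sub_cancel_left, jm, mul_sum, sum_mul]
  refine sum_congr rfl fun a ha => ?_
  have hau : a < u := (Finset.mem_filter.1 ha).2
  have hav : a ≠ v := by simp only [Ne, Fin.ext_iff, Fin.lt_def] at hau ⊢; omega
  rw [← map_mul, ← map_mul, Equiv.mul_swap_eq_swap_mul, Equiv.swap_apply_left,
    Equiv.swap_apply_of_ne_of_ne hau.ne hav]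

theorem commute_of_swap_jm_of_val_eq_succ {k : Fin n} (hku : k ≠ u) (hkv : k ≠ v) :
    Commute (of ℂ _ (Equiv.swap u v)) (jm n k) := by
  refine commute_of_jm_of_apply_eq_self (Equiv.swap_apply_of_ne_of_ne hku hkv)
    (Equiv.pred_swap_apply_iff (p := (· < k)) ?_)
  simp only [Fin.lt_def, Ne, Fin.ext_iff] at hku hkv ⊢
  omega

theorem commute_of_swap_evalJM_of_val_eq_succ {f : MvPolynomial (Fin n) ℂ}
    (hf : f.IsSymmetric) : Commute (of ℂ _ (Equiv.swap u v)) (evalJM n f) := by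
  have hs : of ℂ _ (Equiv.swap u v) * of ℂ _ (Equiv.swap u v) = 1 := by
    rw [← map_mul, Equiv.swap_mul_self, map_one]
  have hne : u ≠ v := by rw [Ne, Fin.ext_iff]; omega
  rw [evalJM_eq_aevalOfCommute]
  exact MvPolynomial.commute_aevalOfCommute_of_mul_self_eq_one commute_jm hs hne
    (of_swap_mul_jm_of_val_eq_succ huv) (fun k => commute_of_swap_jm_of_val_eq_succ huv) (hf _)

end JucysMurphy

theorem evalJM_mem_center_general (n : ℕ) (f : MvPolynomial (Fin n) ℂ)
    (hf : f.IsSymmetric) :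
    evalJM n f ∈ Subalgebra.center ℂ (MonoidAlgebra ℂ (Equiv.Perm (Fin n))) :=
  mem_center_of_commute_of_mclosure_eq_top (Equiv.Perm.mclosure_swap_adjacent n) <| by
    rintro _ ⟨u, v, huv, rfl⟩
    exact commute_of_swap_evalJM_of_val_eq_succ huv hf

/-- For every symmetric polynomial `f` in `n` variables, `f(J_1,…,J_n)` is central
in the group algebra. -/
theorem evalJM_mem_center (n : ℕ) (hn : 1 ≤ n) (f : MvPolynomial (Fin n) ℂ)
    (hf : f.IsSymmetric) :
    evalJM n f ∈ Subalgebra.center ℂ (MonoidAlgebra ℂ (Equiv.Perm (Fin n))) :=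
  evalJM_mem_center_general n f hf
end

section
/- For every complex number d, the product ∏_{i=1}^n (d·1 + J_i) in the group algebra A equals Σ_{σ ∈ S_n} d^{cycles(σ)} σ. -/
open Equiv Equiv.Perm Finset

namespace Equiv.Perm

variable {α : Type*}

theorem SameCycle.of_forall_sameCycle_apply [Finite α] {f g : Perm α} {x y : α}
    (h : ∀ z, g.SameCycle z (f z)) (hxy : f.SameCycle x y) : g.SameCycle x y := by
  obtain ⟨k, -, rfl⟩ := hxy.exists_nat_pow_eq
  clear hxy
  induction k with
  | zero => exact SameCycle.refl _ _
  | succ k ih => rw [pow_succ', mul_apply]; exact ih.trans (h _)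

variable [DecidableEq α]

theorem IsCycle.mul_swap [Finite α] {c : Perm α} {a b : α} (hc : c.IsCycle) (ha : c a ≠ a)
    (hb : c b = b) : (c * swap a b).IsCycle := by
  have hab : a ≠ b := by rintro rfl; exact ha hb
  have hga : (c * swap a b) a = b := by rw [mul_apply, swap_apply_left, hb]
  have hg : ∀ z, z ≠ a → z ≠ b → (c * swap a b) z = c z := fun z hza hzb => by
    rw [mul_apply, swap_apply_of_ne_of_ne hza hzb]
  have hsame : ∀ z, (c * swap a b).SameCycle z (c z) := by
    intro z
    by_cases hza : z = a
    · have hgga : (c * swap a b) ((c * swap a b) a) = c z := by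
        rw [hga, mul_apply, swap_apply_right, hza]
      rw [← hgga, hza]
      exact (SameCycle.refl _ _).apply_right.apply_right
    by_cases hzb : z = b
    · rw [hzb, hb]
    · rw [← hg z hza hzb]
      exact (SameCycle.refl _ _).apply_right
  refine ⟨a, by rw [hga]; exact hab.symm, fun y hy => ?_⟩
  by_cases hya : y = a
  · rw [hya]
  by_cases hyb : y = b
  · exact ⟨1, by rw [zpow_one, hga, hyb]⟩
  · rw [hg y hya hyb] at hy
    exact (hc.sameCycle ha hy).of_forall_sameCycle_apply hsame

theorem disjoint_swap_of_apply_eq_self {σ : Perm α} {a b : α} (ha : σ a = a) (hb : σ b = b) :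
    σ.Disjoint (swap a b) := by
  intro x
  by_cases hxa : x = a
  · exact Or.inl (hxa ▸ ha)
  by_cases hxb : x = b
  · exact Or.inl (hxb ▸ hb)
  · exact Or.inr (swap_apply_of_ne_of_ne hxa hxb)

variable [Fintype α]

theorem card_cycleType_mul_swap {σ : Perm α} {a b : α} (hab : a ≠ b) (hb : σ b = b) :
    Multiset.card (σ * swap a b).cycleType =
      Multiset.card σ.cycleType + if σ a = a then 1 else 0 := by
  by_cases ha : σ a = a
  · rw [(disjoint_swap_of_apply_eq_self ha hb).cycleType_mul, (isCycle_swap hab).cycleType,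
      if_pos ha]
    simp
  rw [if_neg ha, add_zero]
  set c := σ.cycleOf a
  set ρ := σ * c⁻¹
  have hc : c.IsCycle := isCycle_cycleOf σ ha
  have hca : c a ≠ a := by rwa [cycleOf_apply_self]
  have hcb : c b = b := by rw [cycleOf_apply]; split_ifs <;> simp [hb]
  have hρc : ρ.Disjoint c :=
    disjoint_mul_inv_of_mem_cycleFactorsFinset
      (cycleOf_mem_cycleFactorsFinset_iff.2 (mem_support.2 ha))
  have hρa : ρ a = a := (hρc a).resolve_right hca
  have hρb : ρ b = b := by rw [mul_apply, inv_eq_iff_eq.2 hcb.symm, hb]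
  have hρ : ρ.Disjoint (c * swap a b) :=
    hρc.mul_right (disjoint_swap_of_apply_eq_self hρa hρb)
  calc Multiset.card (σ * swap a b).cycleType
      = Multiset.card (ρ * (c * swap a b)).cycleType := by simp [ρ, mul_assoc]
    _ = Multiset.card ρ.cycleType + 1 := by
      rw [hρ.cycleType_mul, (hc.mul_swap hca hcb).cycleType]; simp
    _ = Multiset.card (ρ * c).cycleType := by rw [hρc.cycleType_mul, hc.cycleType]; simp
    _ = Multiset.card σ.cycleType := by simp [ρ]

end Equiv.Perm

section CycleCount

variable {α : Type*} [DecidableEq α]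

theorem filter_insert_mul_swap_apply_eq_self {s : Finset α} {σ : Perm α} {a b : α} (hb : b ∉ s)
    (hab : a ≠ b) (hσ : σ b = b) :
    {x ∈ insert b s | (σ * swap a b) x = x} = {x ∈ s | σ x = x}.erase a := by
  ext x
  simp only [mem_filter, mem_insert, mem_erase, mul_apply]
  by_cases hxa : x = a
  · simp [hxa, hσ, hab.symm]
  by_cases hxb : x = b
  · have : σ a ≠ b := fun h => hab (σ.injective (h.trans hσ.symm))
    simp [hxb, hb, this]
  · simp [hxa, hxb, swap_apply_of_ne_of_ne hxa hxb]

variable [Fintype α]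

/-- For `σ ∈ permsOfFinset s`, the number of orbits of `σ` on `s`: its nontrivial cycles
together with its fixed points in `s`. -/
def cycleCountOn (s : Finset α) (σ : Perm α) : ℕ :=
  Multiset.card σ.cycleType + #{x ∈ s | σ x = x}

theorem cycleCountOn_insert_of_apply_eq_self {s : Finset α} {σ : Perm α} {b : α} (hb : b ∉ s)
    (hσ : σ b = b) : cycleCountOn (insert b s) σ = cycleCountOn s σ + 1 := by
  simp [cycleCountOn, filter_insert, hσ, hb, add_assoc]

theorem cycleCountOn_insert_mul_swap {s : Finset α} {σ : Perm α} {a b : α} (ha : a ∈ s)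
    (hb : b ∉ s) (hσ : σ b = b) : cycleCountOn (insert b s) (σ * swap a b) = cycleCountOn s σ := by
  have hab : a ≠ b := by rintro rfl; exact hb ha
  rw [cycleCountOn, cycleCountOn, card_cycleType_mul_swap hab hσ,
    filter_insert_mul_swap_apply_eq_self hb hab hσ, card_erase_eq_ite]
  by_cases hσa : σ a = a
  · have hmem : a ∈ {x ∈ s | σ x = x} := mem_filter.2 ⟨ha, hσa⟩
    have := card_pos.2 ⟨a, hmem⟩
    rw [if_pos hσa, if_pos hmem]
    omega
  · have hmem : a ∉ {x ∈ s | σ x = x} := fun h => hσa (mem_filter.1 h).2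
    rw [if_neg hσa, if_neg hmem, add_zero]

end CycleCount

section PermsOfFinset

variable {α : Type*} [DecidableEq α]

theorem filter_permsOfFinset_insert_apply_eq_self {s : Finset α} {b : α} (hb : b ∉ s) :
    {τ ∈ permsOfFinset (insert b s) | τ b = b} = permsOfFinset s := by
  ext τ
  simp only [mem_filter, mem_perms_of_finset_iff, mem_insert]
  constructor
  · rintro ⟨hτ, hτb⟩ x hx
    exact (hτ hx).resolve_left (by rintro rfl; exact hx hτb)
  · intro hτ
    exact ⟨fun hx => Or.inr (hτ hx), by_contra fun h => hb (hτ h)⟩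

/-- A permutation of `insert b s` moving `b` is uniquely `σ * swap a b` with `σ` a
permutation of `s` and `a = τ⁻¹ b ∈ s`. -/
theorem sum_filter_permsOfFinset_insert_apply_ne {M : Type*} [AddCommMonoid M]
    (f : Perm α → M) {s : Finset α} {b : α} (hb : b ∉ s) :
    ∑ τ ∈ permsOfFinset (insert b s) with τ b ≠ b, f τ =
      ∑ p ∈ permsOfFinset s ×ˢ s, f (p.1 * swap p.2 b) := by
  have hfix : ∀ σ ∈ permsOfFinset s, σ b = b := fun σ hσ =>
    by_contra fun h => hb (mem_perms_of_finset_iff.1 hσ h)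
  symm
  refine sum_nbij' (fun p => p.1 * swap p.2 b) (fun τ => (τ * swap (τ⁻¹ b) b, τ⁻¹ b))
    ?_ ?_ ?_ ?_ (fun _ _ => rfl)
  · rintro ⟨σ, a⟩ hp
    obtain ⟨hσ, ha⟩ := mem_product.1 hp
    have hab : a ≠ b := by rintro rfl; exact hb ha
    refine mem_filter.2 ⟨mem_perms_of_finset_iff.2 fun {x} hx => ?_, ?_⟩
    · by_cases hxa : x = a
      · exact mem_insert_of_mem (hxa ▸ ha)
      by_cases hxb : x = b
      · exact hxb ▸ mem_insert_self b s
      rw [mul_apply, swap_apply_of_ne_of_ne hxa hxb] at hx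
      exact mem_insert_of_mem (mem_perms_of_finset_iff.1 hσ hx)
    · rw [mul_apply, swap_apply_right]
      exact fun h => hab (σ.injective (h.trans (hfix σ hσ).symm))
  · intro τ hτ
    obtain ⟨hτ, hτb⟩ := mem_filter.1 hτ
    have hτk : τ (τ⁻¹ b) = b := τ.apply_symm_apply b
    have hkb : τ⁻¹ b ≠ b := fun h => hτb (by rwa [h] at hτk)
    have hk : τ⁻¹ b ∈ s :=
      (mem_insert.1 (mem_perms_of_finset_iff.1 hτ (by rw [hτk]; exact hkb.symm))).resolve_left hkb
    refine mem_product.2 ⟨mem_perms_of_finset_iff.2 fun {x} hx => ?_, hk⟩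
    by_cases hxk : x = τ⁻¹ b
    · rwa [hxk]
    by_cases hxb : x = b
    · rw [hxb, mul_apply, swap_apply_right, hτk] at hx
      exact absurd rfl hx
    rw [mul_apply, swap_apply_of_ne_of_ne hxk hxb] at hx
    exact (mem_insert.1 (mem_perms_of_finset_iff.1 hτ hx)).resolve_left hxb
  · rintro ⟨σ, a⟩ hp
    have hinv : (σ * swap a b)⁻¹ b = a := by
      rw [mul_inv_rev, swap_inv, mul_apply, inv_eq_iff_eq.2 (hfix σ (mem_product.1 hp).1).symm,
        swap_apply_right]
    simp only [hinv, mul_assoc, swap_mul_self, mul_one]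
  · intro τ _
    simp only [mul_assoc, swap_mul_self, mul_one]

theorem sum_permsOfFinset_insert {M : Type*} [AddCommMonoid M] (f : Perm α → M) {s : Finset α}
    {b : α} (hb : b ∉ s) :
    ∑ τ ∈ permsOfFinset (insert b s), f τ =
      ∑ σ ∈ permsOfFinset s, (f σ + ∑ a ∈ s, f (σ * swap a b)) := by
  rw [← sum_filter_add_sum_filter_not _ (fun τ => τ b = b),
    filter_permsOfFinset_insert_apply_eq_self hb, sum_filter_permsOfFinset_insert_apply_ne f hb,
    sum_add_distrib, sum_product]

end PermsOfFinset

section GroupAlgebra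

variable {k α : Type*} [CommSemiring k] [DecidableEq α] [Fintype α]

noncomputable def cycleSum (d : k) (s : Finset α) : MonoidAlgebra k (Perm α) :=
  ∑ σ ∈ permsOfFinset s, MonoidAlgebra.single σ (d ^ cycleCountOn s σ)

theorem cycleSum_empty (d : k) : cycleSum d (∅ : Finset α) = 1 := by
  have : permsOfFinset (∅ : Finset α) = {1} := by
    ext σ
    simp [mem_perms_of_finset_iff, Equiv.ext_iff]
  simp [cycleSum, this, cycleCountOn, MonoidAlgebra.one_def]

theorem cycleSum_insert (d : k) {s : Finset α} {b : α} (hb : b ∉ s) :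
    cycleSum d (insert b s) =
      cycleSum d s * (d • 1 + ∑ a ∈ s, MonoidAlgebra.of k (Perm α) (swap a b)) := by
  rw [cycleSum, sum_permsOfFinset_insert _ hb, cycleSum, sum_mul]
  refine sum_congr rfl fun σ hσ => ?_
  have hσb : σ b = b := by_contra fun h => hb (mem_perms_of_finset_iff.1 hσ h)
  rw [mul_add, mul_smul_comm, mul_one, MonoidAlgebra.smul_single', ← pow_succ',
    ← cycleCountOn_insert_of_apply_eq_self hb hσb, mul_sum]
  congr 1
  refine sum_congr rfl fun a ha => ?_
  rw [MonoidAlgebra.of_apply, MonoidAlgebra.single_mul_single, mul_one,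
    cycleCountOn_insert_mul_swap ha hb hσb]

theorem permsOfFinset_univ : permsOfFinset (univ : Finset α) = univ := by
  ext σ
  simp [mem_perms_of_finset_iff]

end GroupAlgebra

theorem cycleCountOn_univ {n : ℕ} (σ : Perm (Fin n)) : cycleCountOn univ σ = cycles σ := rfl

theorem prod_take_map_d_add_jm (n : ℕ) (d : ℂ) {m : ℕ} (hm : m ≤ n) :
    (((List.finRange n).map fun i =>
        d • (1 : MonoidAlgebra ℂ (Perm (Fin n))) + jm n i).take m).prod =
      cycleSum d (univ.filter fun x : Fin n => (x : ℕ) < m) := by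
  induction m with
  | zero => simp [cycleSum_empty]
  | succ m ih =>
    have hmn : m < n := hm
    have hs : univ.filter (fun x : Fin n => (x : ℕ) < m + 1) =
        insert ⟨m, hmn⟩ (univ.filter fun x : Fin n => (x : ℕ) < m) := by
      ext x
      simp only [mem_filter, mem_univ, true_and, mem_insert, Fin.ext_iff]
      omega
    rw [List.prod_take_succ _ _ (by simpa using hmn), ih hmn.le, hs, cycleSum_insert _ (by simp)]
    simp only [List.getElem_map, List.getElem_finRange]
    -- `jm n ⟨m, _⟩` unfolds to the sum over the `k` with `k < m`
    rfl

theorem prod_d_add_jm_eq_general (n : ℕ) (d : ℂ) :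
    ((List.finRange n).map fun i =>
        d • (1 : MonoidAlgebra ℂ (Equiv.Perm (Fin n))) + jm n i).prod =
      ∑ σ : Equiv.Perm (Fin n), MonoidAlgebra.single σ (d ^ cycles σ) := by
  rw [← List.take_of_length_le (l := List.map _ _) (i := n) (by simp),
    prod_take_map_d_add_jm n d le_rfl, filter_true_of_mem fun x _ => x.isLt, cycleSum,
    permsOfFinset_univ]
  simp only [cycleCountOn_univ]

/-- For every complex number `d`, `∏_{i=1}^n (d·1 + J_i) = Σ_σ d^{cycles(σ)} σ`
(the JM elements commute, so the order of the factors is immaterial; we multiply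
them in increasing order of the index). -/
theorem prod_d_add_jm_eq (n : ℕ) (hn : 1 ≤ n) (d : ℂ) :
    ((List.finRange n).map fun i =>
        d • (1 : MonoidAlgebra ℂ (Equiv.Perm (Fin n))) + jm n i).prod =
      ∑ σ : Equiv.Perm (Fin n), MonoidAlgebra.single σ (d ^ cycles σ) :=
  prod_d_add_jm_eq_general n d
end

section
/- The Weingarten integrals define a class function: for every integer d ≥ n and all σ, π ∈ S_n, ∫_{U(d)} ∏_{i=1}^n u_{ii} · conj(u_{i σ(i)}) dU = ∫_{U(d)} ∏_{i=1}^n u_{ii} · conj(u_{i (πσπ^{-1})(i)}) dU. -/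
/-!
Extend `π` to a permutation `e` of `Fin d` and conjugate by its permutation matrix `P`. The map
`U ↦ P U P⁻¹` permutes rows and columns of `U` by `e`, so it turns the integrand for `σ` into the
one for `πσπ⁻¹` after reindexing the products by `π`; and it is a continuous automorphism of the
compact group `U(d)`, hence preserves its Haar measure.
-/

open MeasureTheory

/-- The Borel σ-algebra on the unitary group `U(d)`. -/
noncomputable instance (d : ℕ) : MeasurableSpace (Matrix.unitaryGroup (Fin d) ℂ) :=
  borel _

instance (d : ℕ) : BorelSpace (Matrix.unitaryGroup (Fin d) ℂ) := ⟨rfl⟩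

instance Matrix.instCompactSpaceUnitaryGroup {n 𝕜 : Type*} [Fintype n] [DecidableEq n]
    [RCLike 𝕜] : CompactSpace (Matrix.unitaryGroup n 𝕜) := by
  have hclosed : IsClosed (Matrix.unitaryGroup n 𝕜 : Set (Matrix n n 𝕜)) := isClosed_unitary
  open scoped Matrix.Norms.Elementwise in
  refine isCompact_iff_compactSpace.mp (Metric.isCompact_of_isClosed_isBounded hclosed ?_)
  exact (Metric.isBounded_closedBall (x := 0) (r := 1)).subset fun U hU =>
    mem_closedBall_zero_iff.2 (entrywise_sup_norm_bound_of_unitary hU)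

theorem MeasureTheory.integral_conj_eq_self {G E : Type*} [Group G] [TopologicalSpace G]
    [IsTopologicalGroup G] [CompactSpace G] [MeasurableSpace G] [BorelSpace G]
    [NormedAddCommGroup E] [NormedSpace ℝ E] (μ : Measure G) [μ.IsHaarMeasure] (g : G)
    (f : G → E) : ∫ x, f (g * x * g⁻¹) ∂μ = ∫ x, f x ∂μ :=
  ((MulAut.conj g : G →* G).measurePreserving (μ := μ)
      ((continuous_mul_const g⁻¹).comp (continuous_const_mul g))
      (MulAut.conj g).surjective rfl).integral_comp
    ((Homeomorph.mulLeft g).trans (Homeomorph.mulRight g⁻¹)).measurableEmbedding f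

theorem Equiv.Perm.prod_comp_conj {ι α : Type*} [Fintype ι] [CommMonoid α]
    (π σ : Equiv.Perm ι) (f : ι → ι → α) :
    ∏ i, f (π i) (π (σ i)) = ∏ i, f i ((π * σ * π⁻¹) i) := by
  rw [← Equiv.prod_comp π (fun i => f i ((π * σ * π⁻¹) i))]
  simp

namespace Matrix

variable {n R : Type*} [Fintype n] [DecidableEq n] [CommRing R] [StarRing R]

theorem permMatrix_mem_unitaryGroup (e : Equiv.Perm n) :
    e.permMatrix R ∈ unitaryGroup n R := by
  rw [Unitary.mem_iff, star_eq_conjTranspose, conjTranspose_permMatrix, ← permMatrix_mul,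
    ← permMatrix_mul]
  simp

def permUnitary (e : Equiv.Perm n) : unitaryGroup n R :=
  ⟨e.permMatrix R, permMatrix_mem_unitaryGroup e⟩

theorem coe_permUnitary_mul_mul_inv (e : Equiv.Perm n) (U : unitaryGroup n R) :
    ((permUnitary e * U * (permUnitary e)⁻¹ : unitaryGroup n R) : Matrix n n R) =
      (U : Matrix n n R).submatrix e e := by
  rw [← Unitary.star_eq_inv, Submonoid.coe_mul, Submonoid.coe_mul, Unitary.coe_star, permUnitary,
    star_eq_conjTranspose, conjTranspose_permMatrix, PEquiv.toMatrix_toPEquiv_mul,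
    PEquiv.mul_toMatrix_toPEquiv, submatrix_submatrix]
  rfl

end Matrix

theorem weingarten_integral_conj_invariant_general (n : ℕ) (d : ℕ) (hd : n ≤ d)
    (μ : Measure (Matrix.unitaryGroup (Fin d) ℂ)) (hμ : μ.IsHaarMeasure)
    (σ π : Equiv.Perm (Fin n)) :
    ∫ U : Matrix.unitaryGroup (Fin d) ℂ,
        (∏ i : Fin n,
          (U : Matrix (Fin d) (Fin d) ℂ) (Fin.castLE hd i) (Fin.castLE hd i)) *
        starRingEnd ℂ (∏ i : Fin n,
          (U : Matrix (Fin d) (Fin d) ℂ) (Fin.castLE hd i) (Fin.castLE hd (σ i))) ∂μ =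
      ∫ U : Matrix.unitaryGroup (Fin d) ℂ,
        (∏ i : Fin n,
          (U : Matrix (Fin d) (Fin d) ℂ) (Fin.castLE hd i) (Fin.castLE hd i)) *
        starRingEnd ℂ (∏ i : Fin n,
          (U : Matrix (Fin d) (Fin d) ℂ) (Fin.castLE hd i)
            (Fin.castLE hd ((π * σ * π⁻¹) i))) ∂μ := by
  set e := π.viaEmbedding (Fin.castLEEmb hd)
  have he (i : Fin n) : e (Fin.castLE hd i) = Fin.castLE hd (π i) := π.viaEmbedding_apply _ i
  rw [← integral_conj_eq_self μ (Matrix.permUnitary e)]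
  refine integral_congr_ae (ae_of_all _ fun U => ?_)
  set u := fun i j : Fin n => (U : Matrix (Fin d) (Fin d) ℂ) (Fin.castLE hd i) (Fin.castLE hd j)
  simp only [Matrix.coe_permUnitary_mul_mul_inv, Matrix.submatrix_apply, he]
  rw [Equiv.prod_comp π (fun i => u i i), Equiv.Perm.prod_comp_conj π σ u]

/-- The Weingarten integrals define a class function: for all `σ, π ∈ S_n`,
`∫_{U(d)} ∏ᵢ u_{ii} conj(u_{iσ(i)}) dU = ∫_{U(d)} ∏ᵢ u_{ii} conj(u_{i(πσπ⁻¹)(i)}) dU`. -/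
theorem weingarten_integral_conj_invariant (n : ℕ) (hn : 1 ≤ n) (d : ℕ) (hd : n ≤ d)
    (μ : Measure (Matrix.unitaryGroup (Fin d) ℂ)) (hμ : μ.IsHaarMeasure)
    (hprob : IsProbabilityMeasure μ) (σ π : Equiv.Perm (Fin n)) :
    ∫ U : Matrix.unitaryGroup (Fin d) ℂ,
        (∏ i : Fin n,
          (U : Matrix (Fin d) (Fin d) ℂ) (Fin.castLE hd i) (Fin.castLE hd i)) *
        starRingEnd ℂ (∏ i : Fin n,
          (U : Matrix (Fin d) (Fin d) ℂ) (Fin.castLE hd i) (Fin.castLE hd (σ i))) ∂μ =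
      ∫ U : Matrix.unitaryGroup (Fin d) ℂ,
        (∏ i : Fin n,
          (U : Matrix (Fin d) (Fin d) ℂ) (Fin.castLE hd i) (Fin.castLE hd i)) *
        starRingEnd ℂ (∏ i : Fin n,
          (U : Matrix (Fin d) (Fin d) ℂ) (Fin.castLE hd i)
            (Fin.castLE hd ((π * σ * π⁻¹) i))) ∂μ :=
  weingarten_integral_conj_invariant_general n d hd μ hμ σ π
end
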